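/- arXiv:2505.21825 — 2 statements merged into one kernel-verified Lean document; each statement's English description precedes it below -/
import Mathlib

section
/- Let G be a finite undirected graph in which s and t are NOT connected. Form H as the disjoint union of two copies of G, let i be uniformly random in {1,2}, let u be the copy of s in G_i, v_1 the copy of t in G_1, v_2 the copy of t in G_2, and apply a uniformly random permutation to the vertex labels of H. Then for any deterministic function f mapping labeled graphs with three marked vertices to {1,2}, the probability (over i and the random relabeling) that f(H, u, v_1, v_2) = i is exactly 1/2. -/
open scoped Classical

/-- The disjoint union of two copies of a graph `G`, on vertex set `V × Fin 2`. -/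
def twoCopies {V : Type*} (G : SimpleGraph V) : SimpleGraph (V × Fin 2) where
  Adj x y := x.2 = y.2 ∧ G.Adj x.1 y.1
  symm := ⟨fun x y h => ⟨h.1.symm, h.2.symm⟩⟩
  loopless := ⟨fun x h => G.loopless.irrefl x.1 h.2⟩

private lemma fin2_add (j : Fin 2) : j + 1 + 1 = j := by fin_cases j <;> rfl

/-- swap the two copies of the component of `s`, fix everything else. -/
noncomputable def swapS {V : Type*} (G : SimpleGraph V) (s : V) : Equiv.Perm (V × Fin 2) where
  toFun x := if G.Reachable s x.1 then (x.1, x.2 + 1) else x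
  invFun x := if G.Reachable s x.1 then (x.1, x.2 + 1) else x
  left_inv x := by
    by_cases hx : G.Reachable s x.1 <;> simp [hx, fin2_add]
  right_inv x := by
    by_cases hx : G.Reachable s x.1 <;> simp [hx, fin2_add]

lemma swapS_invol {V : Type*} (G : SimpleGraph V) (s : V) (x : V × Fin 2) :
    swapS G s (swapS G s x) = x := (swapS G s).left_inv x

lemma adj_swapS {V : Type*} (G : SimpleGraph V) (s : V) (x y : V × Fin 2) :
    (twoCopies G).Adj (swapS G s x) (swapS G s y) ↔ (twoCopies G).Adj x y := by
  by_cases hx : G.Reachable s x.1 <;> by_cases hy : G.Reachable s y.1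
  · have hx' : swapS G s x = (x.1, x.2 + 1) := by simp [swapS, hx]
    have hy' : swapS G s y = (y.1, y.2 + 1) := by simp [swapS, hy]
    rw [hx', hy']
    constructor
    · rintro ⟨h1, h2⟩
      exact ⟨add_right_cancel (h1 : x.2 + 1 = y.2 + 1), h2⟩
    · rintro ⟨h1, h2⟩
      exact ⟨by rw [h1], h2⟩
  · have hx' : swapS G s x = (x.1, x.2 + 1) := by simp [swapS, hx]
    have hy' : swapS G s y = y := by simp [swapS, hy]
    rw [hx', hy']
    constructor
    · rintro ⟨-, h2⟩
      exact absurd (hx.trans h2.reachable) hy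
    · rintro ⟨-, h2⟩
      exact absurd (hx.trans h2.reachable) hy
  · have hx' : swapS G s x = x := by simp [swapS, hx]
    have hy' : swapS G s y = (y.1, y.2 + 1) := by simp [swapS, hy]
    rw [hx', hy']
    constructor
    · rintro ⟨-, h2⟩
      exact absurd (hy.trans h2.symm.reachable) hx
    · rintro ⟨-, h2⟩
      exact absurd (hy.trans h2.symm.reachable) hx
  · simp [swapS, hx, hy]

lemma map_swapS {V : Type*} (G : SimpleGraph V) (s : V) :
    (twoCopies G).map (swapS G s).toEmbedding = twoCopies G := by
  ext x y
  rw [SimpleGraph.map_adj]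
  constructor
  · rintro ⟨a, b, hab, rfl, rfl⟩
    exact (adj_swapS G s a b).mpr hab
  · intro hxy
    exact ⟨swapS G s x, swapS G s y, (adj_swapS G s x y).mpr hxy,
      swapS_invol G s x, swapS_invol G s y⟩

/-- if `s` and `t` are not connected in `G`, form `H` as the disjoint union
of two copies of `G`, pick `i` uniformly in `Fin 2`, let `u` be the copy of `s` in copy
`i`, `v_1, v_2` the copies of `t`, and relabel by a uniformly random permutation `π`.
Then for any deterministic function `f` of the labeled graph and the three marked
vertices, the probability (over `i` and `π`) that `f = i` is exactly `1/2`. -/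
theorem stmt_12 {V : Type*} [Fintype V] (G : SimpleGraph V) (s t : V)
    (h : ¬ G.Reachable s t)
    (f : SimpleGraph (V × Fin 2) → (V × Fin 2) → (V × Fin 2) → (V × Fin 2) → Fin 2) :
    2 * (Finset.univ.filter (fun w : Fin 2 × Equiv.Perm (V × Fin 2) =>
          f ((twoCopies G).map w.2.toEmbedding)
            (w.2 (s, w.1)) (w.2 (t, 0)) (w.2 (t, 1)) = w.1)).card
      = Fintype.card (Fin 2 × Equiv.Perm (V × Fin 2)) := by
  set σ : Equiv.Perm (V × Fin 2) := swapS G s with hσ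
  set Φ : Fin 2 × Equiv.Perm (V × Fin 2) → Fin 2 × Equiv.Perm (V × Fin 2) :=
    fun w => (w.1 + 1, w.2 * σ) with hΦ
  set F : Finset (Fin 2 × Equiv.Perm (V × Fin 2)) :=
    Finset.univ.filter (fun w : Fin 2 × Equiv.Perm (V × Fin 2) =>
          f ((twoCopies G).map w.2.toEmbedding)
            (w.2 (s, w.1)) (w.2 (t, 0)) (w.2 (t, 1)) = w.1) with hF
  have hmem : ∀ w : Fin 2 × Equiv.Perm (V × Fin 2), w ∈ F ↔
      f ((twoCopies G).map w.2.toEmbedding)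
        (w.2 (s, w.1)) (w.2 (t, 0)) (w.2 (t, 1)) = w.1 := by
    intro w
    simp [hF]
  have hσs : ∀ (j : Fin 2), σ (s, j) = (s, j + 1) := by
    intro j; simp [hσ, swapS, SimpleGraph.Reachable.refl]
  have hσt : ∀ (j : Fin 2), σ (t, j) = (t, j) := by
    intro j; simp [hσ, swapS, h]
  have hgraph : ∀ π : Equiv.Perm (V × Fin 2),
      (twoCopies G).map (π * σ).toEmbedding = (twoCopies G).map π.toEmbedding := by
    intro π
    have h1 : (π * σ).toEmbedding = σ.toEmbedding.trans π.toEmbedding := rfl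
    rw [h1, show ⇑(σ.toEmbedding.trans π.toEmbedding) = ⇑π.toEmbedding ∘ ⇑σ.toEmbedding from rfl,
      ← SimpleGraph.map_map, hσ, map_swapS]
  have hfin : ∀ a b : Fin 2, (a = b + 1 ↔ ¬ a = b) := by decide
  have hkey : ∀ w : Fin 2 × Equiv.Perm (V × Fin 2),
      (Φ w ∈ F ↔ w ∉ F) := by
    rintro ⟨i, π⟩
    rw [hmem, hmem]
    simp only [hΦ, Equiv.Perm.mul_apply, hσs, hσt, fin2_add, hgraph]
    exact hfin _ _
  have hΦΦ : ∀ w, Φ (Φ w) = w := by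
    rintro ⟨i, π⟩
    have hσσ : σ * σ = 1 := Equiv.ext fun x => swapS_invol G s x
    simp [hΦ, fin2_add, mul_assoc, hσσ]
  have hcard : F.card = Fᶜ.card := by
    apply Finset.card_nbij' (i := Φ) (j := Φ)
    · intro w hw
      rw [Finset.mem_coe, Finset.mem_compl]
      exact fun hc => (hkey w).mp hc hw
    · intro w hw
      rw [Finset.mem_coe, Finset.mem_compl] at hw
      by_contra hc
      have : Φ (Φ w) ∈ F ↔ Φ w ∉ F := hkey (Φ w)
      rw [hΦΦ] at this
      exact hw (this.mpr hc)
    · intro w _; exact hΦΦ w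
    · intro w _; exact hΦΦ w
  have hsum := Finset.card_add_card_compl F
  omega
end

section
/- Fix δ ∈ (0,1) and d, l ≥ 1. The exploration algorithm on Bridge(d, l, 2l, 0) that, at each of the d intersections, picks a uniformly random one of the 3 unexplored directions and explores l vertices down it before trying another, reaches the final vertex within (1+δ)·2·l·d total queries with probability at least 1 - exp(-2·d·δ²), where the per-intersection cost is l, 2l, or 3l each with probability 1/3. -/
open scoped Classical

/-- the exploration algorithm on `Bridge(d, l, 2l, 0)` that at each of the
`d` intersections tries the `3` unexplored directions in uniformly random order incurs a
per-intersection cost uniform on `{l, 2l, 3l}`, independently across intersections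
(modeled by uniform `c : Fin d → Fin 3` with cost `(c i + 1)·l`); it reaches the final
vertex within `(1+δ)·2·l·d` total queries with probability at least `1 - exp(-2dδ²)`. -/
theorem stmt_19 (d l : ℕ) (hl : 1 ≤ l) (δ : ℝ) (hδ : δ ∈ Set.Ioo (0:ℝ) 1) :
    1 - Real.exp (-2 * d * δ ^ 2) ≤
      ((Finset.univ.filter (fun c : Fin d → Fin 3 =>
          (∑ i, ((((c i : ℕ) + 1) * l : ℕ) : ℝ)) ≤ (1 + δ) * 2 * l * d)).card : ℝ)
        / 3 ^ d := by
  obtain ⟨hδ0, hδ1⟩ := hδ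
  have hl' : (1:ℝ) ≤ l := by exact_mod_cast hl
  set t : ℝ := 2 * δ with ht
  have ht0 : 0 < t := by positivity
  set P : (Fin d → Fin 3) → Prop := fun c =>
    (∑ i, ((((c i : ℕ) + 1) * l : ℕ) : ℝ)) ≤ (1 + δ) * 2 * l * d with hP
  set T : (Fin d → Fin 3) → ℝ := fun c => ∑ i, ((c i : ℕ) : ℝ) with hT
  set K : ℝ := (1 + 2 * δ) * d with hK
  -- bad configurations have large T
  have hbad : ∀ c : Fin d → Fin 3, ¬ P c → K < T c := by
    intro c hc
    rw [hP, not_le] at hc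
    have hsum : (∑ i, ((((c i : ℕ) + 1) * l : ℕ) : ℝ)) = (T c + d) * l := by
      push_cast
      simp only [hT, add_mul, one_mul, Finset.sum_add_distrib, ← Finset.sum_mul,
        Finset.sum_const, Finset.card_univ, Fintype.card_fin, nsmul_eq_mul]
    rw [hsum] at hc
    rw [hK]
    nlinarith [hc, hl']
  -- Chernoff: bound the bad count
  have key : ((Finset.univ.filter (fun c : Fin d → Fin 3 => ¬ P c)).card : ℝ)
      ≤ Real.exp (-2 * d * δ ^ 2) * 3 ^ d := by
    have step1 : ((Finset.univ.filter (fun c : Fin d → Fin 3 => ¬ P c)).card : ℝ)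
        ≤ ∑ c ∈ Finset.univ.filter (fun c : Fin d → Fin 3 => ¬ P c),
            Real.exp (t * (T c - K)) := by
      rw [Finset.card_eq_sum_ones]
      push_cast
      refine Finset.sum_le_sum ?_
      intro c hc
      rw [Finset.mem_filter] at hc
      have := hbad c hc.2
      have hnn : 0 ≤ t * (T c - K) := by nlinarith
      calc (1:ℝ) = Real.exp 0 := by simp
        _ ≤ Real.exp (t * (T c - K)) := Real.exp_le_exp.mpr hnn
    have step2 : (∑ c ∈ Finset.univ.filter (fun c : Fin d → Fin 3 => ¬ P c),
          Real.exp (t * (T c - K)))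
        ≤ ∑ c : Fin d → Fin 3, Real.exp (t * (T c - K)) :=
      Finset.sum_le_sum_of_subset_of_nonneg (Finset.filter_subset _ _)
        (fun _ _ _ => (Real.exp_pos _).le)
    have step3 : (∑ c : Fin d → Fin 3, Real.exp (t * (T c - K)))
        = Real.exp (-(t * K)) * ∑ c : Fin d → Fin 3,
            ∏ i, Real.exp (t * ((c i : ℕ) : ℝ)) := by
      rw [Finset.mul_sum]
      refine Finset.sum_congr rfl ?_
      intro c _
      rw [← Real.exp_sum, ← Real.exp_add, ← Finset.mul_sum]
      congr 1
      simp only [hT]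
      ring
    have step4 : (∑ c : Fin d → Fin 3, ∏ i, Real.exp (t * ((c i : ℕ) : ℝ)))
        = (∑ j : Fin 3, Real.exp (t * ((j : ℕ) : ℝ))) ^ d :=
      (Fintype.sum_pow (fun j : Fin 3 => Real.exp (t * ((j : ℕ) : ℝ))) d).symm
    have hF : (∑ j : Fin 3, Real.exp (t * ((j : ℕ) : ℝ)))
        ≤ 3 * Real.exp (t + t ^ 2 / 2) := by
      have hsum3 : (∑ j : Fin 3, Real.exp (t * ((j : ℕ) : ℝ)))
          = 1 + Real.exp t + Real.exp t * Real.exp t := by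
        rw [Fin.sum_univ_three]
        norm_num [mul_two, Real.exp_add]
      rw [hsum3]
      have hcosh := Real.cosh_le_exp_half_sq t
      rw [Real.cosh_eq] at hcosh
      have hb1 : (1:ℝ) ≤ Real.exp (t ^ 2 / 2) := by
        rw [show (1:ℝ) = Real.exp 0 by simp]
        exact Real.exp_le_exp.mpr (by positivity)
      have ha : 0 < Real.exp t := Real.exp_pos t
      have hinv : Real.exp (-t) * Real.exp t = 1 := by
        rw [← Real.exp_add]; simp
      have hsplit : Real.exp (t + t ^ 2 / 2) = Real.exp t * Real.exp (t ^ 2 / 2) := by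
        rw [← Real.exp_add]
      rw [hsplit]
      nlinarith [hcosh, ha, hb1, hinv, mul_le_mul_of_nonneg_left hcosh ha.le]
    have hpow : (∑ j : Fin 3, Real.exp (t * ((j : ℕ) : ℝ))) ^ d
        ≤ (3 * Real.exp (t + t ^ 2 / 2)) ^ d := by
      refine pow_le_pow_left₀ ?_ hF d
      exact Finset.sum_nonneg fun _ _ => (Real.exp_pos _).le
    have hpow2 : ((3:ℝ) * Real.exp (t + t ^ 2 / 2)) ^ d
        = 3 ^ d * Real.exp (d * (t + t ^ 2 / 2)) := by
      rw [mul_pow, ← Real.exp_nat_mul]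
    calc ((Finset.univ.filter (fun c : Fin d → Fin 3 => ¬ P c)).card : ℝ)
        ≤ ∑ c ∈ Finset.univ.filter (fun c : Fin d → Fin 3 => ¬ P c),
            Real.exp (t * (T c - K)) := step1
      _ ≤ ∑ c : Fin d → Fin 3, Real.exp (t * (T c - K)) := step2
      _ = Real.exp (-(t * K)) * ∑ c : Fin d → Fin 3,
            ∏ i, Real.exp (t * ((c i : ℕ) : ℝ)) := step3
      _ = Real.exp (-(t * K)) * (∑ j : Fin 3, Real.exp (t * ((j : ℕ) : ℝ))) ^ d := by
          rw [step4]
      _ ≤ Real.exp (-(t * K)) * (3 ^ d * Real.exp (d * (t + t ^ 2 / 2))) := by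
          rw [← hpow2]
          exact mul_le_mul_of_nonneg_left hpow (Real.exp_pos _).le
      _ = Real.exp (-2 * d * δ ^ 2) * 3 ^ d := by
          rw [show Real.exp (-(t * K)) * (3 ^ d * Real.exp (d * (t + t ^ 2 / 2)))
              = (Real.exp (-(t * K)) * Real.exp (d * (t + t ^ 2 / 2))) * 3 ^ d by ring,
            ← Real.exp_add]
          congr 2
          rw [ht, hK]
          ring
  -- final arithmetic
  have hsplit : (Finset.univ.filter P).card
      + (Finset.univ.filter (fun c : Fin d → Fin 3 => ¬ P c)).card = 3 ^ d := by
    rw [Finset.card_filter_add_card_filter_not]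
    simp [Fintype.card_fun]
  have h3 : (0:ℝ) < 3 ^ d := by positivity
  have hgood : ((Finset.univ.filter P).card : ℝ)
      = 3 ^ d - ((Finset.univ.filter (fun c : Fin d → Fin 3 => ¬ P c)).card : ℝ) := by
    have := congrArg (fun n : ℕ => (n : ℝ)) hsplit
    push_cast at this
    linarith
  have : ((Finset.univ.filter P).card : ℝ) / 3 ^ d
      = 1 - ((Finset.univ.filter (fun c : Fin d → Fin 3 => ¬ P c)).card : ℝ) / 3 ^ d := by
    rw [hgood, sub_div, div_self h3.ne']
  have hbb : ((Finset.univ.filter (fun c : Fin d → Fin 3 => ¬ P c)).card : ℝ) / 3 ^ d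
      ≤ Real.exp (-2 * d * δ ^ 2) := by
    rw [div_le_iff₀ h3]
    exact key
  have hfinal : 1 - Real.exp (-2 * d * δ ^ 2)
      ≤ ((Finset.univ.filter P).card : ℝ) / 3 ^ d := by
    rw [this]
    linarith
  exact hfinal
end
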